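/- For a uniform random bit C and deterministic variables A = X = Y = 1, B = C, both observed independence constraints I(A : (Y,B)) = 0 and I((A,X) : B) = 0 hold, and the entropy vector is log 2 times (0,0,0,1,0,0,1,0,1,1,0,1,1,1,1) in the standard 15-component ordering. -/
import Mathlib


open Real BigOperators Finset

/-- Probability that random variable `X` takes value `x`, under pmf `p` on a finite sample space. -/
noncomputable def pr {Ω α : Type*} [Fintype Ω] [DecidableEq α]
    (p : Ω → ℝ) (X : Ω → α) (x : α) : ℝ :=
  ∑ ω, if X ω = x then p ω else 0

/-- Shannon entropy (natural log) of a finite random variable. -/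
noncomputable def ent {Ω α : Type*} [Fintype Ω] [Fintype α] [DecidableEq α]
    (p : Ω → ℝ) (X : Ω → α) : ℝ :=
  -∑ x, pr p X x * Real.log (pr p X x)

/-- Mutual information I(X:Y) = H(X)+H(Y)-H(XY). -/
noncomputable def mi {Ω α β : Type*} [Fintype Ω] [Fintype α] [Fintype β]
    [DecidableEq α] [DecidableEq β] (p : Ω → ℝ) (X : Ω → α) (Y : Ω → β) : ℝ :=
  ent p X + ent p Y - ent p (fun ω => (X ω, Y ω))

/-- Conditional mutual information I(X:Y|Z) = H(XZ)+H(YZ)-H(XYZ)-H(Z). -/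
noncomputable def cmi {Ω α β γ : Type*} [Fintype Ω] [Fintype α] [Fintype β] [Fintype γ]
    [DecidableEq α] [DecidableEq β] [DecidableEq γ]
    (p : Ω → ℝ) (X : Ω → α) (Y : Ω → β) (Z : Ω → γ) : ℝ :=
  ent p (fun ω => (X ω, Z ω)) + ent p (fun ω => (Y ω, Z ω))
    - ent p (fun ω => (X ω, Y ω, Z ω)) - ent p Z

/-- Uniform pmf on one bit. -/
noncomputable def p1 : Bool → ℝ := fun _ => 1 / 2

/-- With C a uniform bit, A = X = Y = 1 deterministic and B = C, the observed
independences I(A:(Y,B)) = 0 and I((A,X):B) = 0 hold and the entropy vector is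
log 2 · (0,0,0,1,0,0,1,0,1,1,0,1,1,1,1) in the ordering
(A,X,Y,B,AX,AY,AB,XY,XB,YB,AXY,AXB,AYB,XYB,AXYB). -/
theorem p4_extremal_ray_iv :
    let A : Bool → Bool := fun _ => true
    let X : Bool → Bool := fun _ => true
    let Y : Bool → Bool := fun _ => true
    let B : Bool → Bool := fun c => c
    mi p1 A (fun ω => (Y ω, B ω)) = 0 ∧
    mi p1 (fun ω => (A ω, X ω)) B = 0 ∧
    ent p1 A = 0 * Real.log 2 ∧
    ent p1 X = 0 * Real.log 2 ∧
    ent p1 Y = 0 * Real.log 2 ∧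
    ent p1 B = 1 * Real.log 2 ∧
    ent p1 (fun ω => (A ω, X ω)) = 0 * Real.log 2 ∧
    ent p1 (fun ω => (A ω, Y ω)) = 0 * Real.log 2 ∧
    ent p1 (fun ω => (A ω, B ω)) = 1 * Real.log 2 ∧
    ent p1 (fun ω => (X ω, Y ω)) = 0 * Real.log 2 ∧
    ent p1 (fun ω => (X ω, B ω)) = 1 * Real.log 2 ∧
    ent p1 (fun ω => (Y ω, B ω)) = 1 * Real.log 2 ∧
    ent p1 (fun ω => (A ω, X ω, Y ω)) = 0 * Real.log 2 ∧
    ent p1 (fun ω => (A ω, X ω, B ω)) = 1 * Real.log 2 ∧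
    ent p1 (fun ω => (A ω, Y ω, B ω)) = 1 * Real.log 2 ∧
    ent p1 (fun ω => (X ω, Y ω, B ω)) = 1 * Real.log 2 ∧
    ent p1 (fun ω => (A ω, X ω, Y ω, B ω)) = 1 * Real.log 2 := by
  intro A X Y B
  refine ⟨?_, ?_, ?_, ?_, ?_, ?_, ?_, ?_, ?_, ?_, ?_, ?_, ?_, ?_, ?_, ?_, ?_⟩ <;>
    simp only [mi, ent, pr, p1, A, X, Y, B, Fintype.sum_prod_type, Fintype.sum_bool] <;>
    norm_num <;>
    (try rw [one_div, Real.log_inv]) <;>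
    ring
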